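/- Let D be a strong left-orthogonal divisor on a smooth projective rational surface X. Then D² ≥ −2. Consequently, for a strong exceptional toric system (A₁,…,A_n), one has A_i² ≥ −2 for all 1 ≤ i ≤ n−1. -/

import Mathlib

/-- The numerical data of a smooth projective rational surface `X`
(over an algebraically closed field of characteristic zero):
its Picard group with the intersection form, the canonical class `K`,
the dimensions `hⁱ(D)` of cohomology of line bundles, Serre duality,
the Riemann–Roch formula `χ(D) = 1 + D·(D−K)/2` (which encodes `χ(O_X)=1`),
the effectivity predicate and the classes of irreducible reduced curves. -/
structure Surface where
  Pic : Type
  [grp : AddCommGroup Pic]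
  inter : Pic → Pic → ℤ
  inter_symm : ∀ D E, inter D E = inter E D
  inter_add_left : ∀ D E F, inter (D + E) F = inter D F + inter E F
  inter_zsmul_left : ∀ (m : ℤ) (D E : Pic), inter (m • D) E = m * inter D E
  K : Pic
  h0 : Pic → ℕ
  h1 : Pic → ℕ
  h2 : Pic → ℕ
  serre : ∀ D, h2 D = h0 (K - D)
  riemannRoch : ∀ D,
    2 * ((h0 D : ℤ) - (h1 D : ℤ) + (h2 D : ℤ)) = 2 + inter D (D - K)
  IrredCurve : Pic → Prop
  Effective : Pic → Prop
  effective_iff_h0 : ∀ D, Effective D ↔ 0 < h0 D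
  effective_decomp : ∀ D, Effective D ↔
    ∃ c : Pic →₀ ℕ, (∀ C ∈ c.support, IrredCurve C) ∧ D = c.sum fun C k => k • C
  inter_irred_nonneg : ∀ C C', IrredCurve C → IrredCurve C' → C ≠ C' → 0 ≤ inter C C'

attribute [instance] Surface.grp

namespace Surface

variable (S : Surface)

/-- The Euler characteristic `χ(D) = h⁰(D) − h¹(D) + h²(D)`. -/
def chi (D : S.Pic) : ℤ := (S.h0 D : ℤ) - (S.h1 D : ℤ) + (S.h2 D : ℤ)

/-- `D` is numerically left-orthogonal: `χ(−D) = 0`. -/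
def NumLeftOrth (D : S.Pic) : Prop := S.chi (-D) = 0

/-- `D` is an `r`-class: numerically left-orthogonal with `D² = r`. -/
def IsClass (r : ℤ) (D : S.Pic) : Prop := S.NumLeftOrth D ∧ S.inter D D = r

/-- `D` is nef: nonnegative intersection with every irreducible curve. -/
def Nef (D : S.Pic) : Prop := ∀ C, S.IrredCurve C → 0 ≤ S.inter D C

/-- `X` is a weak del Pezzo surface: `K² > 0` and `−K` is nef. -/
def WeakDelPezzo : Prop := 0 < S.inter S.K S.K ∧ S.Nef (-S.K)

end Surface

/-- A toric system `(A₁, …, A_n)`: cyclically consecutive classes meet in `1`,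
all other pairs are orthogonal, and the total sum is `−K`. -/
def IsToricSystem (S : Surface) {n : ℕ} [NeZero n] (A : Fin n → S.Pic) : Prop :=
  (∀ i : Fin n, S.inter (A i) (A (i + 1)) = 1) ∧
  (∀ i j : Fin n, j ≠ i → j ≠ i + 1 → i ≠ j + 1 → S.inter (A i) (A j) = 0) ∧
  (∑ i, A i = -S.K)

/-- `D` is strong left-orthogonal: `hⁱ(−D) = 0` for all `i` and `hⁱ(D) = 0` for
`i ≠ 0`. -/
def SLO (S : Surface) (D : S.Pic) : Prop :=
  S.h0 (-D) = 0 ∧ S.h1 (-D) = 0 ∧ S.h2 (-D) = 0 ∧ S.h1 D = 0 ∧ S.h2 D = 0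

/- Adding Riemann–Roch for `D` and `−D` cancels the canonical class: `χ(D) + χ(−D) = 2 + D²`.
For a strong left-orthogonal `D` the left side is `h⁰(D) + 0`, so `D² = h⁰(D) − 2 ≥ −2`. -/

namespace Surface

variable (S : Surface)

theorem inter_neg_left (D E : S.Pic) : S.inter (-D) E = -S.inter D E := by
  simpa using S.inter_zsmul_left (-1) D E

theorem inter_neg_right (D E : S.Pic) : S.inter D (-E) = -S.inter D E := by
  rw [S.inter_symm, inter_neg_left, S.inter_symm]

theorem inter_add_right (D E F : S.Pic) : S.inter D (E + F) = S.inter D E + S.inter D F := by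
  rw [S.inter_symm, S.inter_add_left, S.inter_symm E, S.inter_symm F]

theorem two_mul_chi (D : S.Pic) : 2 * S.chi D = 2 + S.inter D D - S.inter D S.K := by
  rw [chi, S.riemannRoch, sub_eq_add_neg, inter_add_right, inter_neg_right]
  ring

theorem chi_add_chi_neg (D : S.Pic) : S.chi D + S.chi (-D) = 2 + S.inter D D := by
  have hD := S.two_mul_chi D
  have hnegD := S.two_mul_chi (-D)
  rw [inter_neg_left, inter_neg_right, inter_neg_left, neg_neg] at hnegD
  linarith

end Surface

namespace SLO

variable {S : Surface} {D : S.Pic}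

theorem chi_neg (hD : SLO S D) : S.chi (-D) = 0 := by
  obtain ⟨h0, h1, h2, -, -⟩ := hD
  simp [Surface.chi, h0, h1, h2]

theorem chi_eq_h0 (hD : SLO S D) : S.chi D = S.h0 D := by
  obtain ⟨-, -, -, h1, h2⟩ := hD
  simp [Surface.chi, h1, h2]

theorem inter_self_eq_h0_sub_two (hD : SLO S D) : S.inter D D = S.h0 D - 2 := by
  have h := S.chi_add_chi_neg D
  rw [hD.chi_eq_h0, hD.chi_neg] at h
  linarith

theorem neg_two_le_inter_self (hD : SLO S D) : -2 ≤ S.inter D D := by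
  rw [hD.inter_self_eq_h0_sub_two]
  omega

end SLO

/-- A strong left-orthogonal divisor `D` on a smooth projective
rational surface satisfies `D² ≥ −2`; consequently, for a strong exceptional toric
system `(A₁,…,A_n)` (all consecutive sums `A_k + ⋯ + A_l` with `1 ≤ k ≤ l ≤ n − 1`
are strong left-orthogonal, here written `0`-indexed with `l ≤ n − 2`), one has
`Aᵢ² ≥ −2` for all `1 ≤ i ≤ n − 1`. -/
theorem stmt19 (S : Surface) :
    (∀ D : S.Pic, SLO S D → -2 ≤ S.inter D D) ∧
    (∀ (n : ℕ) [NeZero n] (A : Fin n → S.Pic), IsToricSystem S A →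
      (∀ k l : ℕ, k ≤ l → l ≤ n - 2 →
        SLO S (∑ i ∈ Finset.Icc k l, A (Fin.ofNat n i))) →
      ∀ i : Fin n, (i : ℕ) < n - 1 → -2 ≤ S.inter (A i) (A i)) := by
  refine ⟨fun D hD => hD.neg_two_le_inter_self, ?_⟩
  intro n _ A _ hSLO i hi
  have hAi : SLO S (A i) := by
    simpa only [Finset.Icc_self, Finset.sum_singleton, Fin.ofNat_val_eq_self]
      using hSLO i i le_rfl (by omega)
  exact hAi.neg_two_le_inter_self
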